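/- In the setting where the first factor is the quantum principal homogeneous space X̃ and the second factor is the quantum cone Ξ̃: assume additionally t₂₂t₁₁ − q·t₂₁t₁₂ = 1 and τ₁₁τ₂₂ − q·τ₁₂τ₂₁ = 0. Then the elements k₁₁, k₁₂, k₂₁, k₂₂ satisfy: k₁₁k₁₂ = q⁻¹k₁₂k₁₁, k₂₁k₂₂ = q⁻¹k₂₂k₂₁, k₁₁k₂₁ = q⁻¹k₂₁k₁₁, k₁₂k₂₂ = q⁻¹k₂₂k₁₂, k₁₂k₂₁ = k₂₁k₁₂, k₁₁k₂₂ − k₂₂k₁₁ = (q⁻¹ − q)k₁₂k₂₁, and k₂₂k₁₁ − q·k₁₂k₂₁ = 0. -/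

import Mathlib

/-!
The kernel matrix factors as `k = t · S(τ)`, where `S(τ) = [[τ₂₂, -q⁻¹τ₁₂], [-qτ₂₁, τ₁₁]]` is the
antipode of the quantum matrix `τ`. Both `t` (opposite relations with parameter `q`) and `S(τ)` are
quantum matrices with parameter `q⁻¹`, and their entries commute, so their product is again a
quantum matrix with parameter `q⁻¹` (the coproduct of `O_{q⁻¹}(M₂)` is an algebra map). The
quantum determinant is multiplicative and invariant under the antipode, so
`det k = det t · det τ = 0`.
-/

section

variable {K A : Type*} [Field K] [Ring A] [Algebra K A]

/-- `[[a, b], [c, d]]` satisfies the relations of the quantum matrix algebra `O_p(M₂)`. -/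
structure IsQuantumMatrix (p : K) (a b c d : A) : Prop where
  ab : a * b = p • (b * a)
  ac : a * c = p • (c * a)
  bd : b * d = p • (d * b)
  cd : c * d = p • (d * c)
  bc : b * c = c * b
  ad : a * d - d * a = (p - p⁻¹) • (b * c)

def qdet (p : K) (a b c d : A) : A := d * a - p⁻¹ • (b * c)

lemma mul_mul_mul_comm_of_mem {S T : Set A} (hcomm : ∀ x ∈ S, ∀ y ∈ T, Commute x y)
    {x y x' y' : A} (hy : y ∈ S) (hx' : x' ∈ T) : x * x' * (y * y') = x * y * (x' * y') :=
  (hcomm y hy x' hx').symm.mul_mul_mul_comm x y'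

namespace IsQuantumMatrix

variable {p : K} {a b c d : A}

lemma ba (h : IsQuantumMatrix p a b c d) (hp : p ≠ 0) : b * a = p⁻¹ • (a * b) :=
  (eq_inv_smul_iff₀ hp).2 h.ab.symm

lemma ca (h : IsQuantumMatrix p a b c d) (hp : p ≠ 0) : c * a = p⁻¹ • (a * c) :=
  (eq_inv_smul_iff₀ hp).2 h.ac.symm

lemma db (h : IsQuantumMatrix p a b c d) (hp : p ≠ 0) : d * b = p⁻¹ • (b * d) :=
  (eq_inv_smul_iff₀ hp).2 h.bd.symm

lemma dc (h : IsQuantumMatrix p a b c d) (hp : p ≠ 0) : d * c = p⁻¹ • (c * d) :=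
  (eq_inv_smul_iff₀ hp).2 h.cd.symm

lemma da (h : IsQuantumMatrix p a b c d) : d * a = a * d - (p - p⁻¹) • (b * c) := by
  rw [← h.ad, sub_sub_cancel]

lemma qdet_eq (h : IsQuantumMatrix p a b c d) : qdet p a b c d = a * d - p • (b * c) := by
  rw [qdet, h.da, sub_sub, ← add_smul, sub_add_cancel]

lemma inv_of_opposite (hp : p ≠ 0) (hab : b * a = p • (a * b)) (hac : c * a = p • (a * c))
    (hbd : d * b = p • (b * d)) (hcd : d * c = p • (c * d)) (hbc : c * b = b * c)
    (had : d * a - a * d = (p - p⁻¹) • (c * b)) : IsQuantumMatrix p⁻¹ a b c d where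
  ab := (eq_inv_smul_iff₀ hp).2 hab.symm
  ac := (eq_inv_smul_iff₀ hp).2 hac.symm
  bd := (eq_inv_smul_iff₀ hp).2 hbd.symm
  cd := (eq_inv_smul_iff₀ hp).2 hcd.symm
  bc := hbc.symm
  ad := by rw [inv_inv, ← neg_sub, had, hbc, ← neg_smul, neg_sub]

lemma antipode (h : IsQuantumMatrix p a b c d) (hp : p ≠ 0) :
    IsQuantumMatrix p⁻¹ d (-p⁻¹ • b) (-p • c) a := by
  constructor <;>
  · simp only [smul_mul_assoc, mul_smul_comm, smul_smul, h.ab, h.ac, h.bd, h.cd, h.bc, h.da,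
      inv_inv]
    match_scalars <;> field_simp <;> ring

lemma qdet_antipode (h : IsQuantumMatrix p a b c d) (hp : p ≠ 0) :
    qdet p⁻¹ d (-p⁻¹ • b) (-p • c) a = qdet p a b c d := by
  rw [h.qdet_eq, qdet, inv_inv, smul_mul_smul_comm, smul_smul]
  congr 2
  field_simp

section Product

variable {a' b' c' d' : A} (hp : p ≠ 0) (h : IsQuantumMatrix p a b c d)
  (h' : IsQuantumMatrix p a' b' c' d')
  (hcomm : ∀ x ∈ ({a, b, c, d} : Set A), ∀ y ∈ ({a', b', c', d'} : Set A), Commute x y)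
include hp h h' hcomm

-- After regrouping every term as `(x * y) * (x' * y')`, with `x, y` entries of the first and
-- `x', y'` entries of the second matrix, each factor is put in normal order by its own relations.
theorem mul :
    IsQuantumMatrix p (a * a' + b * c') (a * b' + b * d') (c * a' + d * c') (c * b' + d * d') := by
  constructor <;>
  · simp only [add_mul, mul_add, sub_mul, mul_sub, smul_mul_assoc, mul_smul_comm, smul_add,
      smul_sub, smul_smul, mul_mul_mul_comm_of_mem hcomm, Set.mem_insert_iff,
      Set.mem_singleton_iff, true_or, or_true,
      h.ba hp, h.ca hp, h.db hp, h.dc hp, h.bc.symm, h.da,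
      h'.ba hp, h'.ca hp, h'.db hp, h'.dc hp, h'.bc.symm, h'.da]
    match_scalars <;> field_simp <;> ring

theorem qdet_mul :
    qdet p (a * a' + b * c') (a * b' + b * d') (c * a' + d * c') (c * b' + d * d') =
      qdet p a b c d * qdet p a' b' c' d' := by
  simp only [qdet, add_mul, mul_add, sub_mul, mul_sub, smul_mul_assoc, mul_smul_comm, smul_add,
    smul_sub, smul_smul, mul_mul_mul_comm_of_mem hcomm, Set.mem_insert_iff,
    Set.mem_singleton_iff, true_or, or_true,
    h.ca hp, h.db hp, h.bc.symm, h.da, h'.ba hp, h'.dc hp, h'.da]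
  match_scalars <;> field_simp <;> ring

end Product

end IsQuantumMatrix

end

theorem kernel_relations_XXi_general
    {A : Type*} [Ring A] [Algebra ℂ A] (q : ℝ) (hq0 : 0 < q)
    (t₁₁ t₁₂ t₂₁ t₂₂ τ₁₁ τ₁₂ τ₂₁ τ₂₂ : A)
    -- (i) every tᵢⱼ commutes with every τₖₗ:
    (hcomm : ∀ s ∈ ({t₁₁, t₁₂, t₂₁, t₂₂} : Set A),
      ∀ σ ∈ ({τ₁₁, τ₁₂, τ₂₁, τ₂₂} : Set A), s * σ = σ * s)
    -- (ii) the τ's satisfy the quantum SL₂ relations: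
    (hτ1 : τ₁₁ * τ₁₂ = (q : ℂ) • (τ₁₂ * τ₁₁)) (hτ2 : τ₂₁ * τ₂₂ = (q : ℂ) • (τ₂₂ * τ₂₁))
    (hτ3 : τ₁₁ * τ₂₁ = (q : ℂ) • (τ₂₁ * τ₁₁)) (hτ4 : τ₁₂ * τ₂₂ = (q : ℂ) • (τ₂₂ * τ₁₂))
    (hτ5 : τ₁₂ * τ₂₁ = τ₂₁ * τ₁₂)
    (hτ6 : τ₁₁ * τ₂₂ - τ₂₂ * τ₁₁ = ((q : ℂ) - (q : ℂ)⁻¹) • (τ₁₂ * τ₂₁))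
    -- (iii) the t's satisfy the opposite quantum SL₂ relations:
    (ht1 : t₁₂ * t₁₁ = (q : ℂ) • (t₁₁ * t₁₂)) (ht2 : t₂₂ * t₂₁ = (q : ℂ) • (t₂₁ * t₂₂))
    (ht3 : t₂₁ * t₁₁ = (q : ℂ) • (t₁₁ * t₂₁)) (ht4 : t₂₂ * t₁₂ = (q : ℂ) • (t₁₂ * t₂₂))
    (ht5 : t₂₁ * t₁₂ = t₁₂ * t₂₁)
    (ht6 : t₂₂ * t₁₁ - t₁₁ * t₂₂ = ((q : ℂ) - (q : ℂ)⁻¹) • (t₂₁ * t₁₂))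
    -- determinant relations:
    (hdet_τ : τ₁₁ * τ₂₂ - (q : ℂ) • (τ₁₂ * τ₂₁) = 0)
    -- the invariant kernels:
    (k₁₁ k₁₂ k₂₁ k₂₂ : A)
    (hk11 : k₁₁ = t₁₁ * τ₂₂ - (q : ℂ) • (t₁₂ * τ₂₁))
    (hk12 : k₁₂ = -(q : ℂ)⁻¹ • (t₁₁ * τ₁₂) + t₁₂ * τ₁₁)
    (hk21 : k₂₁ = t₂₁ * τ₂₂ - (q : ℂ) • (t₂₂ * τ₂₁))
    (hk22 : k₂₂ = -(q : ℂ)⁻¹ • (t₂₁ * τ₁₂) + t₂₂ * τ₁₁) :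
    k₁₁ * k₁₂ = (q : ℂ)⁻¹ • (k₁₂ * k₁₁) ∧
    k₂₁ * k₂₂ = (q : ℂ)⁻¹ • (k₂₂ * k₂₁) ∧
    k₁₁ * k₂₁ = (q : ℂ)⁻¹ • (k₂₁ * k₁₁) ∧
    k₁₂ * k₂₂ = (q : ℂ)⁻¹ • (k₂₂ * k₁₂) ∧
    k₁₂ * k₂₁ = k₂₁ * k₁₂ ∧
    k₁₁ * k₂₂ - k₂₂ * k₁₁ = ((q : ℂ)⁻¹ - (q : ℂ)) • (k₁₂ * k₂₁) ∧
    k₂₂ * k₁₁ - (q : ℂ) • (k₁₂ * k₂₁) = 0 := by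
  subst hk11 hk12 hk21 hk22
  have hq : (q : ℂ) ≠ 0 := Complex.ofReal_ne_zero.mpr hq0.ne'
  have ht := IsQuantumMatrix.inv_of_opposite hq ht1 ht3 ht4 ht2 ht5 ht6
  have hτ : IsQuantumMatrix (q : ℂ) τ₁₁ τ₁₂ τ₂₁ τ₂₂ := ⟨hτ1, hτ3, hτ4, hτ2, hτ5, hτ6⟩
  have hcomm' : ∀ x ∈ ({t₁₁, t₁₂, t₂₁, t₂₂} : Set A),
      ∀ y ∈ ({τ₂₂, -(q : ℂ)⁻¹ • τ₁₂, -(q : ℂ) • τ₂₁, τ₁₁} : Set A), Commute x y := by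
    intro x hx y hy
    simp only [Set.mem_insert_iff, Set.mem_singleton_iff] at hy
    rcases hy with rfl | rfl | rfl | rfl
    · exact hcomm x hx _ (by simp)
    · exact Commute.smul_right (hcomm x hx _ (by simp)) _
    · exact Commute.smul_right (hcomm x hx _ (by simp)) _
    · exact hcomm x hx _ (by simp)
  have hk := ht.mul (inv_ne_zero hq) (hτ.antipode hq) hcomm'
  have hdet := ht.qdet_mul (inv_ne_zero hq) (hτ.antipode hq) hcomm'
  rw [hτ.qdet_antipode hq, hτ.qdet_eq, hdet_τ, mul_zero] at hdet
  simp only [qdet, inv_inv, mul_smul_comm, neg_smul (q : ℂ), mul_neg, ← sub_eq_add_neg] at hk hdet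
  exact ⟨hk.ab, hk.cd, hk.ac, hk.bd, hk.bc, by simpa only [inv_inv] using hk.ad, hdet⟩

/-- **Commutation relations for the invariant kernels, case `Y₁ = X̃`, `Y₂ = Ξ̃`.**
In a unital ℂ-algebra containing a copy of the opposite quantum `SL₂` (the
`t`'s) and of quantum `SL₂` (the `τ`'s), mutually commuting, and satisfying
the determinant relations `t₂₂t₁₁ - q t₂₁t₁₂ = 1`, `τ₁₁τ₂₂ - q τ₁₂τ₂₁ = 0`,
the kernels `k₁₁ = t₁₁τ₂₂ - q t₁₂τ₂₁`, `k₁₂ = -q⁻¹t₁₁τ₁₂ + t₁₂τ₁₁`,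
`k₂₁ = t₂₁τ₂₂ - q t₂₂τ₂₁`, `k₂₂ = -q⁻¹t₂₁τ₁₂ + t₂₂τ₁₁` satisfy the quantum
`SL₂` relations with `q` replaced by `q⁻¹`, with quantum determinant
`k₂₂k₁₁ - q k₁₂k₂₁ = 0`. -/
theorem kernel_relations_XXi
    {A : Type*} [Ring A] [Algebra ℂ A] (q : ℝ) (hq0 : 0 < q) (hq1 : q < 1)
    (t₁₁ t₁₂ t₂₁ t₂₂ τ₁₁ τ₁₂ τ₂₁ τ₂₂ : A)
    -- (i) every tᵢⱼ commutes with every τₖₗ: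
    (hcomm : ∀ s ∈ ({t₁₁, t₁₂, t₂₁, t₂₂} : Set A),
      ∀ σ ∈ ({τ₁₁, τ₁₂, τ₂₁, τ₂₂} : Set A), s * σ = σ * s)
    -- (ii) the τ's satisfy the quantum SL₂ relations:
    (hτ1 : τ₁₁ * τ₁₂ = (q : ℂ) • (τ₁₂ * τ₁₁)) (hτ2 : τ₂₁ * τ₂₂ = (q : ℂ) • (τ₂₂ * τ₂₁))
    (hτ3 : τ₁₁ * τ₂₁ = (q : ℂ) • (τ₂₁ * τ₁₁)) (hτ4 : τ₁₂ * τ₂₂ = (q : ℂ) • (τ₂₂ * τ₁₂))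
    (hτ5 : τ₁₂ * τ₂₁ = τ₂₁ * τ₁₂)
    (hτ6 : τ₁₁ * τ₂₂ - τ₂₂ * τ₁₁ = ((q : ℂ) - (q : ℂ)⁻¹) • (τ₁₂ * τ₂₁))
    -- (iii) the t's satisfy the opposite quantum SL₂ relations:
    (ht1 : t₁₂ * t₁₁ = (q : ℂ) • (t₁₁ * t₁₂)) (ht2 : t₂₂ * t₂₁ = (q : ℂ) • (t₂₁ * t₂₂))
    (ht3 : t₂₁ * t₁₁ = (q : ℂ) • (t₁₁ * t₂₁)) (ht4 : t₂₂ * t₁₂ = (q : ℂ) • (t₁₂ * t₂₂))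
    (ht5 : t₂₁ * t₁₂ = t₁₂ * t₂₁)
    (ht6 : t₂₂ * t₁₁ - t₁₁ * t₂₂ = ((q : ℂ) - (q : ℂ)⁻¹) • (t₂₁ * t₁₂))
    -- determinant relations:
    (hdet_t : t₂₂ * t₁₁ - (q : ℂ) • (t₂₁ * t₁₂) = 1)
    (hdet_τ : τ₁₁ * τ₂₂ - (q : ℂ) • (τ₁₂ * τ₂₁) = 0)
    -- the invariant kernels:
    (k₁₁ k₁₂ k₂₁ k₂₂ : A)
    (hk11 : k₁₁ = t₁₁ * τ₂₂ - (q : ℂ) • (t₁₂ * τ₂₁))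
    (hk12 : k₁₂ = -(q : ℂ)⁻¹ • (t₁₁ * τ₁₂) + t₁₂ * τ₁₁)
    (hk21 : k₂₁ = t₂₁ * τ₂₂ - (q : ℂ) • (t₂₂ * τ₂₁))
    (hk22 : k₂₂ = -(q : ℂ)⁻¹ • (t₂₁ * τ₁₂) + t₂₂ * τ₁₁) :
    k₁₁ * k₁₂ = (q : ℂ)⁻¹ • (k₁₂ * k₁₁) ∧
    k₂₁ * k₂₂ = (q : ℂ)⁻¹ • (k₂₂ * k₂₁) ∧
    k₁₁ * k₂₁ = (q : ℂ)⁻¹ • (k₂₁ * k₁₁) ∧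
    k₁₂ * k₂₂ = (q : ℂ)⁻¹ • (k₂₂ * k₁₂) ∧
    k₁₂ * k₂₁ = k₂₁ * k₁₂ ∧
    k₁₁ * k₂₂ - k₂₂ * k₁₁ = ((q : ℂ)⁻¹ - (q : ℂ)) • (k₁₂ * k₂₁) ∧
    k₂₂ * k₁₁ - (q : ℂ) • (k₁₂ * k₂₁) = 0 :=
  kernel_relations_XXi_general q hq0 t₁₁ t₁₂ t₂₁ t₂₂ τ₁₁ τ₁₂ τ₂₁ τ₂₂ hcomm hτ1 hτ2 hτ3 hτ4 hτ5 hτ6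
    ht1 ht2 ht3 ht4 ht5 ht6 hdet_τ k₁₁ k₁₂ k₂₁ k₂₂ hk11 hk12 hk21 hk22
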